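/- arXiv:1908.07111 — 8 statements merged into one kernel-verified Lean document; each statement's English description precedes it below -/
import Mathlib

section
/- Let λ₁ < λ₂ < ... < λₙ be positive reals, Ψ : ℝ → ℝ positive on [λ₁, λₙ], and p ∈ ℝⁿ with p⁽ⁱ⁾ ≥ 0, ∑ᵢ p⁽ⁱ⁾ = 1, and at least two indices with p⁽ⁱ⁾ > 0. Define γ(p) = (∑ᵢ Ψ(λᵢ)λᵢ p⁽ⁱ⁾)/(∑ᵢ Ψ(λᵢ) p⁽ⁱ⁾), (Tp)⁽ⁱ⁾ = (λᵢ − γ(p))² p⁽ⁱ⁾ / ∑ⱼ (λⱼ − γ(p))² p⁽ʲ⁾, and Θ(p) = (∑ᵢ Ψ(λᵢ)(λᵢ − γ(p))² p⁽ⁱ⁾)/(∑ᵢ Ψ(λᵢ) p⁽ⁱ⁾). Then Θ(Tp) ≥ Θ(p). -/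
open Finset

noncomputable def gam {n : ℕ} (lam : Fin (n+1) → ℝ) (Psi : ℝ → ℝ) (p : Fin (n+1) → ℝ) : ℝ :=
  (∑ i, Psi (lam i) * lam i * p i) / (∑ i, Psi (lam i) * p i)

noncomputable def Tmap {n : ℕ} (lam : Fin (n+1) → ℝ) (Psi : ℝ → ℝ) (p : Fin (n+1) → ℝ) :
    Fin (n+1) → ℝ :=
  fun i => (lam i - gam lam Psi p) ^ 2 * p i / ∑ j, (lam j - gam lam Psi p) ^ 2 * p j

noncomputable def Theta {n : ℕ} (lam : Fin (n+1) → ℝ) (Psi : ℝ → ℝ) (p : Fin (n+1) → ℝ) : ℝ :=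
  (∑ i, Psi (lam i) * (lam i - gam lam Psi p) ^ 2 * p i) / (∑ i, Psi (lam i) * p i)
theorem theta_monotone {n : ℕ} (lam : Fin (n+1) → ℝ) (Psi : ℝ → ℝ) (p : Fin (n+1) → ℝ)
    (hmono : StrictMono lam) (hpos : 0 < lam 0)
    (hPsi : ∀ x ∈ Set.Icc (lam 0) (lam (Fin.last n)), 0 < Psi x)
    (hp : ∀ i, 0 ≤ p i) (hsum : ∑ i, p i = 1)
    (htwo : ∃ i j, i ≠ j ∧ 0 < p i ∧ 0 < p j) :
    Theta lam Psi p ≤ Theta lam Psi (Tmap lam Psi p) := by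
  have hψ : ∀ i, 0 < Psi (lam i) := fun i =>
    hPsi _ ⟨hmono.monotone (Fin.zero_le i), hmono.monotone (Fin.le_last i)⟩
  set γ := gam lam Psi p with hγ
  set γ' := gam lam Psi (Tmap lam Psi p) with hγ'
  set S := ∑ i, Psi (lam i) * p i with hS
  set E := ∑ i, Psi (lam i) * (lam i - γ) ^ 2 * p i with hE
  set F := ∑ i, Psi (lam i) * (lam i - γ') ^ 2 * (lam i - γ) ^ 2 * p i with hF
  set D := ∑ i, (lam i - γ) ^ 2 * p i with hD
  obtain ⟨i, j, hij, hpi, hpj⟩ := htwo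
  have hSpos : 0 < S :=
    Finset.sum_pos' (fun k _ => mul_nonneg (hψ k).le (hp k))
      ⟨i, Finset.mem_univ i, mul_pos (hψ i) hpi⟩
  have hlamne : lam i ≠ lam j := fun h => hij (hmono.injective h)
  have hk : ∃ k, 0 < p k ∧ lam k ≠ γ := by
    by_cases h : lam i = γ
    · exact ⟨j, hpj, fun h' => hlamne (h.trans h'.symm)⟩
    · exact ⟨i, hpi, h⟩
  obtain ⟨k, hpk, hlk⟩ := hk
  have hsq : 0 < (lam k - γ) ^ 2 :=
    lt_of_le_of_ne (sq_nonneg _) (Ne.symm (pow_ne_zero _ (sub_ne_zero.mpr hlk)))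
  have hEpos : 0 < E :=
    Finset.sum_pos' (fun m _ => mul_nonneg (mul_nonneg (hψ m).le (sq_nonneg _)) (hp m))
      ⟨k, Finset.mem_univ k, mul_pos (mul_pos (hψ k) hsq) hpk⟩
  have hDpos : 0 < D :=
    Finset.sum_pos' (fun m _ => mul_nonneg (sq_nonneg _) (hp m))
      ⟨k, Finset.mem_univ k, mul_pos hsq hpk⟩
  -- γ * S = ∑ ψ λ p
  have hγS : γ * S = ∑ m, Psi (lam m) * lam m * p m := by
    rw [hγ, gam, ← hS, div_mul_cancel₀ _ hSpos.ne']
  -- ∑ ψ (λ - γ) p = 0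
  have hzero : ∑ m, Psi (lam m) * (lam m - γ) * p m = 0 := by
    have h1 : ∀ m, Psi (lam m) * (lam m - γ) * p m
        = Psi (lam m) * lam m * p m - γ * (Psi (lam m) * p m) := fun m => by ring
    simp only [h1, Finset.sum_sub_distrib, ← Finset.mul_sum, ← hS, ← hγS]
    ring
  -- cross term equals E
  have hcross : ∑ m, Psi (lam m) * (lam m - γ') * (lam m - γ) * p m = E := by
    have h1 : ∀ m, Psi (lam m) * (lam m - γ') * (lam m - γ) * p m
        = Psi (lam m) * (lam m - γ) ^ 2 * p m
          + (γ - γ') * (Psi (lam m) * (lam m - γ) * p m) := fun m => by ring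
    simp only [h1, Finset.sum_add_distrib, ← Finset.mul_sum, hzero, mul_zero, add_zero, ← hE]
  -- Cauchy-Schwarz : E^2 ≤ F * S
  have hCS : E ^ 2 ≤ F * S := by
    have key := sum_mul_sq_le_sq_mul_sq Finset.univ
      (fun m => (lam m - γ') * (lam m - γ) * Real.sqrt (Psi (lam m) * p m))
      (fun m => Real.sqrt (Psi (lam m) * p m))
    have hnn : ∀ m : Fin (n+1), 0 ≤ Psi (lam m) * p m :=
      fun m => mul_nonneg (hψ m).le (hp m)
    have e1 : ∀ m : Fin (n+1), (lam m - γ') * (lam m - γ) * Real.sqrt (Psi (lam m) * p m)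
        * Real.sqrt (Psi (lam m) * p m) = Psi (lam m) * (lam m - γ') * (lam m - γ) * p m := by
      intro m
      rw [mul_assoc, Real.mul_self_sqrt (hnn m)]
      ring
    have e2 : ∀ m : Fin (n+1), ((lam m - γ') * (lam m - γ) * Real.sqrt (Psi (lam m) * p m)) ^ 2
        = Psi (lam m) * (lam m - γ') ^ 2 * (lam m - γ) ^ 2 * p m := by
      intro m
      rw [mul_pow, mul_pow, Real.sq_sqrt (hnn m)]
      ring
    have e3 : ∀ m : Fin (n+1), (Real.sqrt (Psi (lam m) * p m)) ^ 2 = Psi (lam m) * p m :=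
      fun m => Real.sq_sqrt (hnn m)
    simp only [e1, e2, e3, hcross] at key
    rw [hF, hS]
    exact key
  -- Theta p = E / S
  have hTp : Theta lam Psi p = E / S := by
    rw [Theta, ← hγ, ← hE, ← hS]
  -- Theta (Tp) = F / E
  have hTTp : Theta lam Psi (Tmap lam Psi p) = F / E := by
    rw [Theta, ← hγ']
    have hnum : ∑ m, Psi (lam m) * (lam m - γ') ^ 2 * Tmap lam Psi p m = F / D := by
      rw [hF, Finset.sum_div]
      refine Finset.sum_congr rfl fun m _ => ?_
      simp only [Tmap, ← hγ, ← hD]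
      ring
    have hden : ∑ m, Psi (lam m) * Tmap lam Psi p m = E / D := by
      rw [hE, Finset.sum_div]
      refine Finset.sum_congr rfl fun m _ => ?_
      simp only [Tmap, ← hγ, ← hD]
      ring
    rw [hnum, hden]
    rw [div_div_div_cancel_right₀ hDpos.ne' F E]
  rw [hTp, hTTp, div_le_div_iff₀ hSpos hEpos]
  calc E * E = E ^ 2 := by ring
    _ ≤ F * S := hCS
end

section
/- With the notation of the previous lemma (λ₁ < ... < λₙ positive, Ψ positive on [λ₁, λₙ], γ, T, Θ as defined), equality Θ(Tp) = Θ(p) holds if and only if there exist two indices i₁ ≠ i₂ such that p⁽ⁱ⁾ = 0 for all i ∉ {i₁, i₂}, and in that case γ(Tp) + γ(p) = λ_{i₁} + λ_{i₂}. -/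
open Finset

/-!
Write `w i = Ψ(λᵢ) pᵢ`, `μ = γ(p)`, `ν = γ(Tp)`, `S = ∑ w (λ - μ)²` and `f i = (λᵢ - μ)(λᵢ - ν)`.
Since `μ` is the `w`-mean of `λ`, `∑ w f = S`, while `∑ w f² = S Θ(Tp)` and `S = Θ(p) ∑ w`;
hence `S (Θ(Tp) - Θ(p))` is the `w`-weighted variance of `f` (the Cauchy–Schwarz defect), and
equality holds iff `f` is constant on the support of `p`. A monic quadratic takes each value at
most twice, which leaves two support points. Conversely, on a two-point support `{λ₁, λ₂}` the
quadratic `(λ - μ)(λ - (λ₁ + λ₂ - μ))` is constant, so `∑ w (λ - μ)² (λ - (λ₁ + λ₂ - μ))` is a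
multiple of `∑ w (λ - μ) = 0`, i.e. `ν = λ₁ + λ₂ - μ`.
-/

section WeightedSums

variable {ι : Type*} [Fintype ι] (w x : ι → ℝ)

lemma sum_mul_sub_div_sum_eq_zero (hw : ∑ i, w i ≠ 0) :
    ∑ i, w i * (x i - (∑ j, w j * x j) / ∑ j, w j) = 0 := by
  simp only [mul_sub, sum_sub_distrib, ← sum_mul]
  field_simp
  ring

lemma div_sum_eq_of_sum_mul_sub_eq_zero {c : ℝ} (hw : ∑ i, w i ≠ 0)
    (h : ∑ i, w i * (x i - c) = 0) : (∑ i, w i * x i) / ∑ i, w i = c := by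
  simp only [mul_sub, sum_sub_distrib, ← sum_mul] at h
  field_simp
  linarith

lemma sum_const_mul_mul_div_sum {k : ℝ} (hk : k ≠ 0) :
    (∑ i, k * w i * x i) / ∑ i, k * w i = (∑ i, w i * x i) / ∑ i, w i := by
  simp only [mul_assoc, ← mul_sum]
  exact mul_div_mul_left _ _ hk

lemma sum_mul_sq_sub_div_sum (hw : ∑ i, w i ≠ 0) :
    ∑ i, w i * (x i - (∑ j, w j * x j) / ∑ j, w j) ^ 2
      = ∑ i, w i * x i ^ 2 - (∑ i, w i * x i) ^ 2 / ∑ i, w i := by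
  set m := (∑ j, w j * x j) / ∑ j, w j with hm
  have expand : ∀ i, w i * (x i - m) ^ 2 = w i * x i ^ 2 - 2 * m * (w i * x i) + m ^ 2 * w i :=
    fun i => by ring
  simp only [expand, sum_add_distrib, sum_sub_distrib, ← mul_sum]
  rw [hm]
  field_simp
  ring

lemma sum_mul_sq_sub_eq_zero_iff (hw_nonneg : ∀ i, 0 ≤ w i) (c : ℝ) :
    ∑ i, w i * (x i - c) ^ 2 = 0 ↔ ∀ i, w i ≠ 0 → x i = c := by
  rw [sum_eq_zero_iff_of_nonneg fun i _ => mul_nonneg (hw_nonneg i) (sq_nonneg _)]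
  simp [sub_eq_zero, or_iff_not_imp_left]

lemma sum_mul_sq_sub_div_sum_eq_zero_iff (hw_nonneg : ∀ i, 0 ≤ w i) (hw : ∑ i, w i ≠ 0) :
    ∑ i, w i * (x i - (∑ j, w j * x j) / ∑ j, w j) ^ 2 = 0 ↔
      ∃ c, ∀ i, w i ≠ 0 → x i = c := by
  rw [sum_mul_sq_sub_eq_zero_iff w x hw_nonneg]
  refine ⟨fun h => ⟨_, h⟩, fun ⟨c, hc⟩ => ?_⟩
  have hmean : ∑ i, w i * (x i - c) = 0 := sum_eq_zero fun i _ => by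
    by_cases hi : w i = 0
    · rw [hi, zero_mul]
    · rw [hc i hi, sub_self, mul_zero]
  rwa [div_sum_eq_of_sum_mul_sub_eq_zero w x hw hmean]

lemma sum_mul_sq_sub_pos (hw_nonneg : ∀ i, 0 ≤ w i) {a b : ι} (ha : 0 < w a) (hb : 0 < w b)
    (hab : x a ≠ x b) (c : ℝ) : 0 < ∑ i, w i * (x i - c) ^ 2 := by
  obtain ⟨e, he, hxe⟩ : ∃ e, 0 < w e ∧ x e - c ≠ 0 := by
    by_cases h : x a = c
    · exact ⟨b, hb, sub_ne_zero.2 (h ▸ hab.symm)⟩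
    · exact ⟨a, ha, sub_ne_zero.2 h⟩
  exact sum_pos' (fun i _ => mul_nonneg (hw_nonneg i) (sq_nonneg _))
    ⟨e, mem_univ e, mul_pos he (sq_pos_of_ne_zero hxe)⟩

end WeightedSums

section Quadratic

variable {R : Type*} [CommRing R] {a b c μ ν : R}

lemma sub_mul_sub_eq_of_add_eq (h : a + b = μ + ν) :
    (a - μ) * (a - ν) = (b - μ) * (b - ν) := by
  linear_combination (a - b) * h

lemma add_eq_of_sub_mul_sub_eq [NoZeroDivisors R] (hab : a ≠ b)
    (h : (a - μ) * (a - ν) = (b - μ) * (b - ν)) : a + b = μ + ν := by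
  have factor : (a - b) * (a + b - (μ + ν)) = 0 := by linear_combination h
  exact sub_eq_zero.1 ((mul_eq_zero.1 factor).resolve_left (sub_ne_zero.2 hab))

lemma eq_or_eq_of_sub_mul_sub_eq [NoZeroDivisors R] (hab : a ≠ b)
    (ha : (c - μ) * (c - ν) = (a - μ) * (a - ν))
    (hb : (c - μ) * (c - ν) = (b - μ) * (b - ν)) : c = a ∨ c = b := by
  by_contra! h
  exact hab (add_left_cancel ((add_eq_of_sub_mul_sub_eq h.1 ha).trans
    (add_eq_of_sub_mul_sub_eq h.2 hb).symm))

lemma eq_zero_of_sub_mul_sub_eq_const [NoZeroDivisors R] {ι M : Type*} [Zero M] {x : ι → R}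
    {q : ι → M} (hx : Function.Injective x) {i j k : ι} (hjk : j ≠ k) (hj : q j ≠ 0)
    (hk : q k ≠ 0) (hc : ∀ l, q l ≠ 0 → (x l - μ) * (x l - ν) = c) (hij : i ≠ j) (hik : i ≠ k) :
    q i = 0 := by
  by_contra hi
  rcases eq_or_eq_of_sub_mul_sub_eq (hx.ne hjk) ((hc i hi).trans (hc j hj).symm)
    ((hc i hi).trans (hc k hk).symm) with h | h
  exacts [hij (hx h), hik (hx h)]

end Quadratic

section Spectral

variable {n : ℕ} (lam : Fin (n+1) → ℝ) (Psi : ℝ → ℝ) (p : Fin (n+1) → ℝ)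

def psiWeight (i : Fin (n+1)) : ℝ := Psi (lam i) * p i

lemma gam_eq :
    gam lam Psi p = (∑ i, psiWeight lam Psi p i * lam i) / ∑ i, psiWeight lam Psi p i := by
  simp only [gam, psiWeight, mul_right_comm]

lemma Theta_eq : Theta lam Psi p =
    (∑ i, psiWeight lam Psi p i * (lam i - gam lam Psi p) ^ 2) / ∑ i, psiWeight lam Psi p i := by
  simp only [Theta, psiWeight, mul_right_comm]

lemma psiWeight_Tmap (i : Fin (n+1)) : psiWeight lam Psi (Tmap lam Psi p) i =
    (∑ j, (lam j - gam lam Psi p) ^ 2 * p j)⁻¹ *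
      (psiWeight lam Psi p i * (lam i - gam lam Psi p) ^ 2) := by
  simp only [psiWeight, Tmap]
  ring

lemma gam_Tmap (hD : ∑ j, (lam j - gam lam Psi p) ^ 2 * p j ≠ 0) :
    gam lam Psi (Tmap lam Psi p) =
      (∑ i, psiWeight lam Psi p i * (lam i - gam lam Psi p) ^ 2 * lam i) /
        ∑ i, psiWeight lam Psi p i * (lam i - gam lam Psi p) ^ 2 := by
  rw [gam_eq]
  simp only [psiWeight_Tmap]
  exact sum_const_mul_mul_div_sum _ _ (inv_ne_zero hD)

lemma Theta_Tmap (hD : ∑ j, (lam j - gam lam Psi p) ^ 2 * p j ≠ 0) :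
    Theta lam Psi (Tmap lam Psi p) =
      (∑ i, psiWeight lam Psi p i * (lam i - gam lam Psi p) ^ 2 *
          (lam i - gam lam Psi (Tmap lam Psi p)) ^ 2) /
        ∑ i, psiWeight lam Psi p i * (lam i - gam lam Psi p) ^ 2 := by
  rw [Theta_eq]
  simp only [psiWeight_Tmap]
  exact sum_const_mul_mul_div_sum _ _ (inv_ne_zero hD)

lemma sum_psiWeight_mul_sub_gam (hA : ∑ i, psiWeight lam Psi p i ≠ 0) :
    ∑ i, psiWeight lam Psi p i * (lam i - gam lam Psi p) = 0 := by
  rw [gam_eq]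
  exact sum_mul_sub_div_sum_eq_zero _ _ hA

lemma sum_psiWeight_mul_sub_gam_mul_sub (hA : ∑ i, psiWeight lam Psi p i ≠ 0) (ν : ℝ) :
    ∑ i, psiWeight lam Psi p i * ((lam i - gam lam Psi p) * (lam i - ν)) =
      ∑ i, psiWeight lam Psi p i * (lam i - gam lam Psi p) ^ 2 := by
  have split : ∀ i, psiWeight lam Psi p i * ((lam i - gam lam Psi p) * (lam i - ν)) =
      psiWeight lam Psi p i * (lam i - gam lam Psi p) ^ 2 +
        (gam lam Psi p - ν) * (psiWeight lam Psi p i * (lam i - gam lam Psi p)) :=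
    fun i => by ring
  rw [sum_congr rfl fun i _ => split i, sum_add_distrib, ← mul_sum,
    sum_psiWeight_mul_sub_gam lam Psi p hA, mul_zero, add_zero]

lemma Theta_Tmap_eq_Theta_iff (hw : ∀ i, 0 ≤ psiWeight lam Psi p i)
    (hA : ∑ i, psiWeight lam Psi p i ≠ 0)
    (hS : ∑ i, psiWeight lam Psi p i * (lam i - gam lam Psi p) ^ 2 ≠ 0)
    (hD : ∑ j, (lam j - gam lam Psi p) ^ 2 * p j ≠ 0) :
    Theta lam Psi (Tmap lam Psi p) = Theta lam Psi p ↔ ∃ c, ∀ i, psiWeight lam Psi p i ≠ 0 →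
      (lam i - gam lam Psi p) * (lam i - gam lam Psi (Tmap lam Psi p)) = c := by
  set w := psiWeight lam Psi p
  set μ := gam lam Psi p
  set S := ∑ i, w i * (lam i - μ) ^ 2
  set f := fun i => (lam i - μ) * (lam i - gam lam Psi (Tmap lam Psi p))
  have hf : ∑ i, w i * f i = S := sum_psiWeight_mul_sub_gam_mul_sub lam Psi p hA _
  have hf2 : ∑ i, w i * f i ^ 2 = S * Theta lam Psi (Tmap lam Psi p) := by
    rw [Theta_Tmap lam Psi p hD, mul_div_cancel₀ _ hS]
    exact sum_congr rfl fun i _ => by ring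
  have defect : S * (Theta lam Psi (Tmap lam Psi p) - Theta lam Psi p) =
      ∑ i, w i * (f i - (∑ j, w j * f j) / ∑ j, w j) ^ 2 := by
    have hΘ : Theta lam Psi p = S / ∑ i, w i := Theta_eq lam Psi p
    rw [sum_mul_sq_sub_div_sum w f hA, hf, hf2, hΘ]
    field_simp
  rw [← sum_mul_sq_sub_div_sum_eq_zero_iff w f hw hA, ← defect, mul_eq_zero, or_iff_right hS,
    sub_eq_zero]

lemma gam_Tmap_add_gam_of_support_subset_pair (hA : ∑ i, psiWeight lam Psi p i ≠ 0)
    (hS : ∑ i, psiWeight lam Psi p i * (lam i - gam lam Psi p) ^ 2 ≠ 0)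
    (hD : ∑ j, (lam j - gam lam Psi p) ^ 2 * p j ≠ 0) {i₁ i₂ : Fin (n+1)}
    (hsupp : ∀ i, i ≠ i₁ → i ≠ i₂ → p i = 0) :
    gam lam Psi (Tmap lam Psi p) + gam lam Psi p = lam i₁ + lam i₂ := by
  set w := psiWeight lam Psi p
  set μ := gam lam Psi p
  have hconst : ∀ i, w i * (lam i - μ) ^ 2 * (lam i - (lam i₁ + lam i₂ - μ)) =
      -((lam i₁ - μ) * (lam i₂ - μ)) * (w i * (lam i - μ)) := by
    intro i
    by_cases h₁ : i = i₁
    · rw [h₁]; ring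
    by_cases h₂ : i = i₂
    · rw [h₂]; ring
    simp only [w, psiWeight, hsupp i h₁ h₂, mul_zero, zero_mul]
  have hmean : ∑ i, w i * (lam i - μ) ^ 2 * (lam i - (lam i₁ + lam i₂ - μ)) = 0 := by
    rw [sum_congr rfl fun i _ => hconst i, ← mul_sum, sum_psiWeight_mul_sub_gam lam Psi p hA,
      mul_zero]
  rw [gam_Tmap lam Psi p hD, div_sum_eq_of_sum_mul_sub_eq_zero _ lam hS hmean]
  ring

lemma Theta_Tmap_eq_Theta_of_support_subset_pair (hw : ∀ i, 0 ≤ psiWeight lam Psi p i)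
    (hA : ∑ i, psiWeight lam Psi p i ≠ 0)
    (hS : ∑ i, psiWeight lam Psi p i * (lam i - gam lam Psi p) ^ 2 ≠ 0)
    (hD : ∑ j, (lam j - gam lam Psi p) ^ 2 * p j ≠ 0) {i₁ i₂ : Fin (n+1)}
    (hsupp : ∀ i, i ≠ i₁ → i ≠ i₂ → p i = 0) :
    Theta lam Psi (Tmap lam Psi p) = Theta lam Psi p := by
  have hsum := gam_Tmap_add_gam_of_support_subset_pair lam Psi p hA hS hD hsupp
  refine (Theta_Tmap_eq_Theta_iff lam Psi p hw hA hS hD).2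
    ⟨(lam i₁ - gam lam Psi p) * (lam i₁ - gam lam Psi (Tmap lam Psi p)), fun i hi => ?_⟩
  by_cases h₁ : i = i₁
  · rw [h₁]
  have h₂ : i = i₂ := by_contra fun h₂ => right_ne_zero_of_mul hi (hsupp i h₁ h₂)
  exact h₂ ▸ sub_mul_sub_eq_of_add_eq (by linarith)

end Spectral

theorem theta_eq_iff_two_support_general {n : ℕ} (lam : Fin (n+1) → ℝ) (Psi : ℝ → ℝ)
    (p : Fin (n+1) → ℝ)
    (hmono : StrictMono lam)
    (hPsi : ∀ x ∈ Set.Icc (lam 0) (lam (Fin.last n)), 0 < Psi x)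
    (hp : ∀ i, 0 ≤ p i)
    (htwo : ∃ i j, i ≠ j ∧ 0 < p i ∧ 0 < p j) :
    (Theta lam Psi (Tmap lam Psi p) = Theta lam Psi p ↔
      ∃ i₁ i₂ : Fin (n+1), i₁ ≠ i₂ ∧ ∀ i, i ≠ i₁ → i ≠ i₂ → p i = 0) ∧
    (Theta lam Psi (Tmap lam Psi p) = Theta lam Psi p →
      ∀ i₁ i₂ : Fin (n+1), i₁ ≠ i₂ → (∀ i, i ≠ i₁ → i ≠ i₂ → p i = 0) →
        gam lam Psi (Tmap lam Psi p) + gam lam Psi p = lam i₁ + lam i₂) := by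
  obtain ⟨a, b, hab, ha, hb⟩ := htwo
  have hlab : lam a ≠ lam b := hmono.injective.ne hab
  have hPsi' (i : Fin (n+1)) : 0 < Psi (lam i) :=
    hPsi _ ⟨hmono.monotone (Fin.zero_le i), hmono.monotone (Fin.le_last i)⟩
  have hw (i : Fin (n+1)) : 0 ≤ psiWeight lam Psi p i := mul_nonneg (hPsi' i).le (hp i)
  have hA : ∑ i, psiWeight lam Psi p i ≠ 0 :=
    (sum_pos' (fun i _ => hw i) ⟨a, mem_univ a, mul_pos (hPsi' a) ha⟩).ne'
  have hS := (sum_mul_sq_sub_pos _ lam hw (mul_pos (hPsi' a) ha) (mul_pos (hPsi' b) hb) hlab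
    (gam lam Psi p)).ne'
  have hD : ∑ j, (lam j - gam lam Psi p) ^ 2 * p j ≠ 0 := by
    simpa only [mul_comm] using (sum_mul_sq_sub_pos p lam hp ha hb hlab (gam lam Psi p)).ne'
  refine ⟨⟨fun h => ?_, fun ⟨_, _, _, hsupp⟩ =>
      Theta_Tmap_eq_Theta_of_support_subset_pair lam Psi p hw hA hS hD hsupp⟩,
    fun _ _ _ _ => gam_Tmap_add_gam_of_support_subset_pair lam Psi p hA hS hD⟩
  obtain ⟨c, hc⟩ := (Theta_Tmap_eq_Theta_iff lam Psi p hw hA hS hD).1 h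
  exact ⟨a, b, hab, fun i => eq_zero_of_sub_mul_sub_eq_const hmono.injective hab ha.ne' hb.ne'
    fun j hj => hc j (mul_ne_zero (hPsi' j).ne' hj)⟩

theorem theta_eq_iff_two_support {n : ℕ} (lam : Fin (n+1) → ℝ) (Psi : ℝ → ℝ)
    (p : Fin (n+1) → ℝ)
    (hmono : StrictMono lam) (hpos : 0 < lam 0)
    (hPsi : ∀ x ∈ Set.Icc (lam 0) (lam (Fin.last n)), 0 < Psi x)
    (hp : ∀ i, 0 ≤ p i) (hsum : ∑ i, p i = 1)
    (htwo : ∃ i j, i ≠ j ∧ 0 < p i ∧ 0 < p j) :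
    (Theta lam Psi (Tmap lam Psi p) = Theta lam Psi p ↔
      ∃ i₁ i₂ : Fin (n+1), i₁ ≠ i₂ ∧ ∀ i, i ≠ i₁ → i ≠ i₂ → p i = 0) ∧
    (Theta lam Psi (Tmap lam Psi p) = Theta lam Psi p →
      ∀ i₁ i₂ : Fin (n+1), i₁ ≠ i₂ → (∀ i, i ≠ i₁ → i ≠ i₂ → p i = 0) →
        gam lam Psi (Tmap lam Psi p) + gam lam Psi p = lam i₁ + lam i₂) :=
  theta_eq_iff_two_support_general lam Psi p hmono hPsi hp htwo
end

section
/- Let λ₁ < λ₂ < ... < λₙ be positive reals, Ψ positive on [λ₁, λₙ], and suppose p ∈ ℝⁿ has exactly two nonzero components p⁽ⁱ¹⁾, p⁽ⁱ²⁾ > 0 with p⁽ⁱ¹⁾ + p⁽ⁱ²⁾ = 1. Then, with T and γ as defined, (Tp)⁽ⁱ¹⁾ = Ψ²(λ_{i₂})p⁽ⁱ²⁾ / (Ψ²(λ_{i₁})p⁽ⁱ¹⁾ + Ψ²(λ_{i₂})p⁽ⁱ²⁾) and (Tp)⁽ⁱ²⁾ = Ψ²(λ_{i₁})p⁽ⁱ¹⁾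 / (Ψ²(λ_{i₁})p⁽ⁱ¹⁾ + Ψ²(λ_{i₂})p⁽ⁱ²⁾). -/
open Finset

theorem Tmap_two_support {n : ℕ} (lam : Fin (n+1) → ℝ) (Psi : ℝ → ℝ) (p : Fin (n+1) → ℝ)
    (hmono : StrictMono lam) (hpos : 0 < lam 0)
    (hPsi : ∀ x ∈ Set.Icc (lam 0) (lam (Fin.last n)), 0 < Psi x)
    (i₁ i₂ : Fin (n+1)) (hne : i₁ ≠ i₂)
    (h1 : 0 < p i₁) (h2 : 0 < p i₂) (hsum : p i₁ + p i₂ = 1)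
    (hzero : ∀ i, i ≠ i₁ → i ≠ i₂ → p i = 0) :
    Tmap lam Psi p i₁ =
      Psi (lam i₂) ^ 2 * p i₂ / (Psi (lam i₁) ^ 2 * p i₁ + Psi (lam i₂) ^ 2 * p i₂) ∧
    Tmap lam Psi p i₂ =
      Psi (lam i₁) ^ 2 * p i₁ / (Psi (lam i₁) ^ 2 * p i₁ + Psi (lam i₂) ^ 2 * p i₂) := by
  -- abbreviations
  set a := Psi (lam i₁) with ha
  set b := Psi (lam i₂) with hb
  have hmem : ∀ i : Fin (n+1), lam i ∈ Set.Icc (lam 0) (lam (Fin.last n)) := fun i =>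
    ⟨hmono.monotone (Fin.zero_le i), hmono.monotone (Fin.le_last i)⟩
  have ha0 : 0 < a := hPsi _ (hmem i₁)
  have hb0 : 0 < b := hPsi _ (hmem i₂)
  have hlne : lam i₁ ≠ lam i₂ := fun h => hne (hmono.injective h)
  -- sums reduce to two terms
  have key : ∀ f : Fin (n+1) → ℝ,
      (∑ i, f i * p i) = f i₁ * p i₁ + f i₂ * p i₂ := by
    intro f
    have h0 : ∀ x ∈ Finset.univ, x ∉ ({i₁, i₂} : Finset (Fin (n+1))) → f x * p x = 0 := by
      intro x _ hx
      simp only [Finset.mem_insert, Finset.mem_singleton, not_or] at hx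
      rw [hzero x hx.1 hx.2, mul_zero]
    rw [← Finset.sum_subset (Finset.subset_univ ({i₁, i₂} : Finset (Fin (n+1)))) h0,
      Finset.sum_pair hne]
  have hD : a * p i₁ + b * p i₂ ≠ 0 := by positivity
  have hg : gam lam Psi p = (a * lam i₁ * p i₁ + b * lam i₂ * p i₂) / (a * p i₁ + b * p i₂) := by
    unfold gam
    rw [key (fun i => Psi (lam i) * lam i), key (fun i => Psi (lam i))]
  set γ := gam lam Psi p with hγ
  have hg1 : lam i₁ - γ = b * p i₂ * (lam i₁ - lam i₂) / (a * p i₁ + b * p i₂) := by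
    rw [hg]; field_simp; ring
  have hg2 : lam i₂ - γ = a * p i₁ * (lam i₂ - lam i₁) / (a * p i₁ + b * p i₂) := by
    rw [hg]; field_simp; ring
  have hS : (∑ j, (lam j - γ) ^ 2 * p j)
      = (lam i₁ - lam i₂) ^ 2 * p i₁ * p i₂ * (a ^ 2 * p i₁ + b ^ 2 * p i₂)
        / (a * p i₁ + b * p i₂) ^ 2 := by
    rw [key (fun j => (lam j - γ) ^ 2), hg1, hg2]
    field_simp
    ring
  have hden : a ^ 2 * p i₁ + b ^ 2 * p i₂ ≠ 0 := by positivity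
  have hsub : lam i₁ - lam i₂ ≠ 0 := sub_ne_zero.mpr hlne
  constructor
  · show (lam i₁ - γ) ^ 2 * p i₁ / ∑ j, (lam j - γ) ^ 2 * p j = _
    rw [hS, hg1]
    field_simp
  · show (lam i₂ - γ) ^ 2 * p i₂ / ∑ j, (lam j - γ) ^ 2 * p j = _
    rw [hS, hg2]
    field_simp
    ring
end

section
/- Under the same setup (p supported on two indices i₁, i₂ with positive components summing to 1), T²p = p, i.e., (T²p)⁽ⁱ¹⁾ = p⁽ⁱ¹⁾ and (T²p)⁽ⁱ²⁾ = p⁽ⁱ²⁾. -/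
open Finset

/-! If `p` is supported on `{i₁, i₂}`, then `γ(p)` is a weighted mean of `λ_{i₁}` and `λ_{i₂}`, so
`λ_{i₁} - γ(p)` and `λ_{i₂} - γ(p)` are multiples `b p₂ c` and `-a p₁ c` of one number `c`, where
`a = Ψ(λ_{i₁})`, `b = Ψ(λ_{i₂})`, `pₖ = p⁽ⁱᵏ⁾`. The factor `c² p₁ p₂` cancels from `Tp`, leaving
`(Tp)⁽ⁱ¹⁾ = b² p₂ / (a² p₁ + b² p₂)` and `(Tp)⁽ⁱ²⁾ = a² p₁ / (a² p₁ + b² p₂)`. Applying this formula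
to `Tp`, which is again supported on `{i₁, i₂}`, the weights `a² b²` cancel and `T²p = p / (p₁ + p₂)`. -/

section TwoPoint

variable {n : ℕ} {lam : Fin (n+1) → ℝ} {Psi : ℝ → ℝ} {p : Fin (n+1) → ℝ} {i₁ i₂ : Fin (n+1)}

theorem Tmap_apply_eq_zero (i : Fin (n+1)) (hi : p i = 0) : Tmap lam Psi p i = 0 := by
  simp [Tmap, hi]

theorem sum_eq_add_of_eq_zero (hne : i₁ ≠ i₂) (hzero : ∀ i, i ≠ i₁ → i ≠ i₂ → p i = 0)
    (f : Fin (n+1) → ℝ) : ∑ i, f i * p i = f i₁ * p i₁ + f i₂ * p i₂ :=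
  Fintype.sum_eq_add i₁ i₂ hne fun i hi => by rw [hzero i hi.1 hi.2, mul_zero]

theorem sub_gam_of_eq_zero (hne : i₁ ≠ i₂) (hzero : ∀ i, i ≠ i₁ → i ≠ i₂ → p i = 0)
    (hS : Psi (lam i₁) * p i₁ + Psi (lam i₂) * p i₂ ≠ 0) :
    lam i₁ - gam lam Psi p =
      Psi (lam i₂) * p i₂ * ((lam i₁ - lam i₂) / (Psi (lam i₁) * p i₁ + Psi (lam i₂) * p i₂)) := by
  rw [gam, sum_eq_add_of_eq_zero hne hzero, sum_eq_add_of_eq_zero hne hzero]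
  field_simp
  ring

theorem Tmap_apply_of_eq_zero (hne : i₁ ≠ i₂) (hzero : ∀ i, i ≠ i₁ → i ≠ i₂ → p i = 0)
    (hl : lam i₁ ≠ lam i₂) (ha : 0 < Psi (lam i₁)) (hb : 0 < Psi (lam i₂))
    (h1 : 0 < p i₁) (h2 : 0 < p i₂) :
    Tmap lam Psi p i₁ =
      Psi (lam i₂) ^ 2 * p i₂ / (Psi (lam i₁) ^ 2 * p i₁ + Psi (lam i₂) ^ 2 * p i₂) := by
  have hS : 0 < Psi (lam i₁) * p i₁ + Psi (lam i₂) * p i₂ := by positivity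
  set a := Psi (lam i₁)
  set b := Psi (lam i₂)
  set c := (lam i₁ - lam i₂) / (a * p i₁ + b * p i₂)
  have h₁ : lam i₁ - gam lam Psi p = b * p i₂ * c := sub_gam_of_eq_zero hne hzero hS.ne'
  have h₂ : lam i₂ - gam lam Psi p = -(a * p i₁ * c) := by
    have : c * (a * p i₁ + b * p i₂) = lam i₁ - lam i₂ := div_mul_cancel₀ _ hS.ne'
    linear_combination h₁ + this
  have hc : c ≠ 0 := div_ne_zero (sub_ne_zero.mpr hl) hS.ne'
  rw [Tmap, sum_eq_add_of_eq_zero hne hzero, h₁, h₂, div_eq_div_iff (by positivity) (by positivity)]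
  ring

theorem Tmap_Tmap_apply_of_eq_zero (hne : i₁ ≠ i₂) (hzero : ∀ i, i ≠ i₁ → i ≠ i₂ → p i = 0)
    (hl : lam i₁ ≠ lam i₂) (ha : 0 < Psi (lam i₁)) (hb : 0 < Psi (lam i₂))
    (h1 : 0 < p i₁) (h2 : 0 < p i₂) :
    Tmap lam Psi (Tmap lam Psi p) i₁ = p i₁ / (p i₁ + p i₂) := by
  have hzero' : ∀ i, i ≠ i₂ → i ≠ i₁ → p i = 0 := fun i hi₂ hi₁ => hzero i hi₁ hi₂
  have hq₁ := Tmap_apply_of_eq_zero hne hzero hl ha hb h1 h2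
  have hq₂ := Tmap_apply_of_eq_zero hne.symm hzero' hl.symm hb ha h2 h1
  have hq₁pos : 0 < Tmap lam Psi p i₁ := by rw [hq₁]; positivity
  have hq₂pos : 0 < Tmap lam Psi p i₂ := by rw [hq₂]; positivity
  have hqzero : ∀ i, i ≠ i₁ → i ≠ i₂ → Tmap lam Psi p i = 0 := fun i hi₁ hi₂ =>
    Tmap_apply_eq_zero i (hzero i hi₁ hi₂)
  rw [Tmap_apply_of_eq_zero hne hqzero hl ha hb hq₁pos hq₂pos, hq₁, hq₂]
  field_simp
  ring

end TwoPoint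

theorem Tmap_sq_eq_self_general {n : ℕ} (lam : Fin (n+1) → ℝ) (Psi : ℝ → ℝ) (p : Fin (n+1) → ℝ)
    (hmono : StrictMono lam)
    (hPsi : ∀ x ∈ Set.Icc (lam 0) (lam (Fin.last n)), 0 < Psi x)
    (i₁ i₂ : Fin (n+1)) (hne : i₁ ≠ i₂)
    (h1 : 0 < p i₁) (h2 : 0 < p i₂) (hsum : p i₁ + p i₂ = 1)
    (hzero : ∀ i, i ≠ i₁ → i ≠ i₂ → p i = 0) :
    Tmap lam Psi (Tmap lam Psi p) i₁ = p i₁ ∧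
    Tmap lam Psi (Tmap lam Psi p) i₂ = p i₂ := by
  have hmem : ∀ i, lam i ∈ Set.Icc (lam 0) (lam (Fin.last n)) := fun i =>
    ⟨hmono.monotone (Fin.zero_le i), hmono.monotone (Fin.le_last i)⟩
  have ha := hPsi _ (hmem i₁)
  have hb := hPsi _ (hmem i₂)
  have hl : lam i₁ ≠ lam i₂ := hmono.injective.ne hne
  constructor
  · rw [Tmap_Tmap_apply_of_eq_zero hne hzero hl ha hb h1 h2, hsum, div_one]
  · rw [Tmap_Tmap_apply_of_eq_zero hne.symm (fun i hi₂ hi₁ => hzero i hi₁ hi₂) hl.symm hb ha h2 h1,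
      add_comm, hsum, div_one]

theorem Tmap_sq_eq_self {n : ℕ} (lam : Fin (n+1) → ℝ) (Psi : ℝ → ℝ) (p : Fin (n+1) → ℝ)
    (hmono : StrictMono lam) (hpos : 0 < lam 0)
    (hPsi : ∀ x ∈ Set.Icc (lam 0) (lam (Fin.last n)), 0 < Psi x)
    (i₁ i₂ : Fin (n+1)) (hne : i₁ ≠ i₂)
    (h1 : 0 < p i₁) (h2 : 0 < p i₂) (hsum : p i₁ + p i₂ = 1)
    (hzero : ∀ i, i ≠ i₁ → i ≠ i₂ → p i = 0) :
    Tmap lam Psi (Tmap lam Psi p) i₁ = p i₁ ∧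
    Tmap lam Psi (Tmap lam Psi p) i₂ = p i₂ :=
  Tmap_sq_eq_self_general lam Psi p hmono hPsi i₁ i₂ hne h1 h2 hsum hzero
end

section
/- Under the same setup (p supported on two indices i₁, i₂ with positive components summing to 1), the fixed point equation Tp = p holds if and only if p⁽ⁱ¹⁾ = Ψ(λ_{i₂})/(Ψ(λ_{i₁}) + Ψ(λ_{i₂})) and p⁽ⁱ²⁾ = Ψ(λ_{i₁})/(Ψ(λ_{i₁}) + Ψ(λ_{i₂})). -/
/-!
On a distribution `p` supported on two points `a = λ_{i₁} ≠ b = λ_{i₂}`, the map `T` reweights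
`p` by `(λ - γ)²` and renormalises, so `Tp = p` exactly when `(a - γ)² = (b - γ)² ≠ 0`, i.e. when
`γ` is the midpoint of `a` and `b`. Since `γ` is the mean of `a` and `b` with weights
`Ψ(a) p⁽ⁱ¹⁾` and `Ψ(b) p⁽ⁱ²⁾`, this happens iff the two weights agree, which together with
`p⁽ⁱ¹⁾ + p⁽ⁱ²⁾ = 1` pins down `p`.
-/

open Finset

section TwoPointSupport

variable {ι : Type*} [Fintype ι] {p : ι → ℝ} {i₁ i₂ : ι}

theorem sum_mul_eq_of_support_pair (hne : i₁ ≠ i₂) (hzero : ∀ i, i ≠ i₁ → i ≠ i₂ → p i = 0)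
    (f : ι → ℝ) : ∑ i, f i * p i = f i₁ * p i₁ + f i₂ * p i₂ :=
  Fintype.sum_eq_add i₁ i₂ hne fun i hi => by rw [hzero i hi.1 hi.2, mul_zero]

theorem reweight_eq_self_iff_of_support_pair (w : ι → ℝ) (hne : i₁ ≠ i₂)
    (h1 : 0 < p i₁) (h2 : 0 < p i₂) (hsum : p i₁ + p i₂ = 1)
    (hzero : ∀ i, i ≠ i₁ → i ≠ i₂ → p i = 0) :
    (fun i => w i * p i / ∑ j, w j * p j) = p ↔ w i₁ = w i₂ ∧ w i₁ ≠ 0 := by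
  rw [sum_mul_eq_of_support_pair hne hzero w]
  set D := w i₁ * p i₁ + w i₂ * p i₂
  have weight_eq_total {i : ι} (hi : 0 < p i) (hfix : w i * p i / D = p i) : w i = D ∧ D ≠ 0 := by
    have hD : D ≠ 0 := fun h => by
      rw [h, div_zero] at hfix
      exact hi.ne' hfix.symm
    refine ⟨mul_right_cancel₀ hi.ne' ?_, hD⟩
    rw [div_eq_iff hD] at hfix
    linarith
  constructor
  · intro hfix
    obtain ⟨hw₁, hD⟩ := weight_eq_total h1 (congrFun hfix i₁)
    obtain ⟨hw₂, -⟩ := weight_eq_total h2 (congrFun hfix i₂)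
    exact ⟨hw₁.trans hw₂.symm, hw₁ ▸ hD⟩
  · rintro ⟨hw, hw₁⟩
    have hD : D = w i₁ := by linear_combination w i₁ * hsum - p i₂ * hw
    funext i
    by_cases hi₁ : i = i₁
    · rw [hi₁, hD, mul_div_cancel_left₀ _ hw₁]
    by_cases hi₂ : i = i₂
    · rw [hi₂, hD, hw, mul_div_cancel_left₀ _ (hw ▸ hw₁)]
    simp [hzero i hi₁ hi₂]

end TwoPointSupport

theorem sq_sub_eq_sq_sub_and_ne_zero_iff {a b c : ℝ} (hab : a ≠ b) :
    (a - c) ^ 2 = (b - c) ^ 2 ∧ (a - c) ^ 2 ≠ 0 ↔ c = (a + b) / 2 := by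
  have hab' : a - b ≠ 0 := sub_ne_zero.mpr hab
  constructor
  · rintro ⟨hsq, -⟩
    have hfac : (a - b) * (a + b - 2 * c) = 0 := by linear_combination hsq
    linarith [(mul_eq_zero.mp hfac).resolve_left hab']
  · rintro rfl
    refine ⟨by ring, ?_⟩
    rw [show a - (a + b) / 2 = (a - b) / 2 by ring]
    exact pow_ne_zero 2 (div_ne_zero hab' two_ne_zero)

theorem weighted_mean_eq_midpoint_iff {u v a b : ℝ} (huv : u + v ≠ 0) (hab : a ≠ b) :
    (u * a + v * b) / (u + v) = (a + b) / 2 ↔ u = v := by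
  rw [div_eq_div_iff huv two_ne_zero]
  constructor
  · intro h
    have hfac : (a - b) * (u - v) = 0 := by linear_combination h
    linarith [(mul_eq_zero.mp hfac).resolve_left (sub_ne_zero.mpr hab)]
  · rintro rfl
    ring

theorem mul_eq_mul_iff_eq_div_add {x y s t : ℝ} (hst : s + t ≠ 0) (hxy : x + y = 1) :
    s * x = t * y ↔ x = t / (s + t) ∧ y = s / (s + t) := by
  rw [eq_div_iff hst, eq_div_iff hst]
  constructor
  · intro h
    exact ⟨by linear_combination h + t * hxy, by linear_combination s * hxy - h⟩
  · rintro ⟨hx, -⟩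
    linear_combination hx - t * hxy

theorem Tmap_fixed_point_iff_general {n : ℕ} (lam : Fin (n+1) → ℝ) (Psi : ℝ → ℝ) (p : Fin (n+1) → ℝ)
    (hmono : StrictMono lam)
    (hPsi : ∀ x ∈ Set.Icc (lam 0) (lam (Fin.last n)), 0 < Psi x)
    (i₁ i₂ : Fin (n+1)) (hne : i₁ ≠ i₂)
    (h1 : 0 < p i₁) (h2 : 0 < p i₂) (hsum : p i₁ + p i₂ = 1)
    (hzero : ∀ i, i ≠ i₁ → i ≠ i₂ → p i = 0) :
    Tmap lam Psi p = p ↔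
      p i₁ = Psi (lam i₂) / (Psi (lam i₁) + Psi (lam i₂)) ∧
      p i₂ = Psi (lam i₁) / (Psi (lam i₁) + Psi (lam i₂)) := by
  have hPsi_pos (i : Fin (n+1)) : 0 < Psi (lam i) :=
    hPsi _ ⟨hmono.monotone (Fin.zero_le i), hmono.monotone (Fin.le_last i)⟩
  have hlam : lam i₁ ≠ lam i₂ := hmono.injective.ne hne
  have hPsi_sum : Psi (lam i₁) + Psi (lam i₂) ≠ 0 := by linarith [hPsi_pos i₁, hPsi_pos i₂]
  have hweights : Psi (lam i₁) * p i₁ + Psi (lam i₂) * p i₂ ≠ 0 := by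
    nlinarith [hPsi_pos i₁, hPsi_pos i₂]
  have hgam : gam lam Psi p = (Psi (lam i₁) * p i₁ * lam i₁ + Psi (lam i₂) * p i₂ * lam i₂) /
      (Psi (lam i₁) * p i₁ + Psi (lam i₂) * p i₂) := by
    rw [gam, sum_mul_eq_of_support_pair hne hzero, sum_mul_eq_of_support_pair hne hzero]
    ring
  calc Tmap lam Psi p = p
      ↔ (lam i₁ - gam lam Psi p) ^ 2 = (lam i₂ - gam lam Psi p) ^ 2 ∧
          (lam i₁ - gam lam Psi p) ^ 2 ≠ 0 :=
        reweight_eq_self_iff_of_support_pair (fun i => (lam i - gam lam Psi p) ^ 2)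
          hne h1 h2 hsum hzero
    _ ↔ gam lam Psi p = (lam i₁ + lam i₂) / 2 := sq_sub_eq_sq_sub_and_ne_zero_iff hlam
    _ ↔ Psi (lam i₁) * p i₁ = Psi (lam i₂) * p i₂ := by
        rw [hgam, weighted_mean_eq_midpoint_iff hweights hlam]
    _ ↔ _ := mul_eq_mul_iff_eq_div_add hPsi_sum hsum

theorem Tmap_fixed_point_iff {n : ℕ} (lam : Fin (n+1) → ℝ) (Psi : ℝ → ℝ) (p : Fin (n+1) → ℝ)
    (hmono : StrictMono lam) (hpos : 0 < lam 0)
    (hPsi : ∀ x ∈ Set.Icc (lam 0) (lam (Fin.last n)), 0 < Psi x)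
    (i₁ i₂ : Fin (n+1)) (hne : i₁ ≠ i₂)
    (h1 : 0 < p i₁) (h2 : 0 < p i₂) (hsum : p i₁ + p i₂ = 1)
    (hzero : ∀ i, i ≠ i₁ → i ≠ i₂ → p i = 0) :
    Tmap lam Psi p = p ↔
      p i₁ = Psi (lam i₂) / (Psi (lam i₁) + Psi (lam i₂)) ∧
      p i₂ = Psi (lam i₁) / (Psi (lam i₁) + Psi (lam i₂)) :=
  Tmap_fixed_point_iff_general lam Psi p hmono hPsi i₁ i₂ hne h1 h2 hsum hzero
end

section
/- Let 0 < λ₁ < λₙ, Ψ₁, Ψₙ > 0, μ₁, μₙ ∈ ℝ not both zero, and α = (Ψ₁μ₁² + Ψₙμₙ²)/(λ₁Ψ₁μ₁² + λₙΨₙμₙ²). Consider ε = μ₁/λ₁·ξ₁ + μₙ/λₙ·ξₙ where ξ₁, ξₙ are orthonormal, g = μ₁ξ₁ + μₙξₙ, and ε⁺ = ε − αg. Then ε⁺ = (λₙ−λ₁)(λₙΨₙμₙ²μ₁ξ₁ − λ₁Ψ₁μ₁²μₙξₙ) / (λ₁λₙ(λ₁Ψ₁μ₁² + λₙΨₙμₙ²)).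 -/
/- Along an eigenvector with eigenvalue `l` the error is scaled by `1 - α l`; with
`α = (w + w') / (l w + l' w')` the difference `l⁻¹ - α` only involves the other weight `w'`,
which is why each component of the new error carries the weight of the other eigenvector. -/
theorem inv_sub_weighted_stepsize {l l' w w' : ℝ} (hl : l ≠ 0) (hD : l * w + l' * w' ≠ 0) :
    l⁻¹ - (w + w') / (l * w + l' * w') = (l' - l) * w' / (l * (l * w + l' * w')) := by
  rw [inv_eq_one_div, div_sub_div _ _ hl hD]
  congr 1
  ring

theorem weighted_sq_add_sq_pos {a b x y : ℝ} (ha : 0 < a) (hb : 0 < b)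
    (hxy : ¬(x = 0 ∧ y = 0)) : 0 < a * x ^ 2 + b * y ^ 2 := by
  rcases not_and_or.mp hxy with hx | hy
  · exact add_pos_of_pos_of_nonneg (by positivity) (by positivity)
  · exact add_pos_of_nonneg_of_pos (by positivity) (by positivity)

theorem error_update_general {E : Type*} [NormedAddCommGroup E] [InnerProductSpace ℝ E]
    (lam1 lamn Ψ₁ Ψₙ μ₁ μₙ : ℝ) (h1 : 0 < lam1) (h1n : lam1 < lamn)
    (hΨ1 : 0 < Ψ₁) (hΨn : 0 < Ψₙ) (hμ : ¬(μ₁ = 0 ∧ μₙ = 0))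
    (ξ₁ ξₙ : E)
    (α : ℝ) (hα : α = (Ψ₁ * μ₁ ^ 2 + Ψₙ * μₙ ^ 2) / (lam1 * Ψ₁ * μ₁ ^ 2 + lamn * Ψₙ * μₙ ^ 2))
    (ε g ε' : E)
    (hε : ε = (μ₁ / lam1) • ξ₁ + (μₙ / lamn) • ξₙ)
    (hg : g = μ₁ • ξ₁ + μₙ • ξₙ)
    (hε' : ε' = ε - α • g) :
    ε' = ((lamn - lam1) * (lamn * Ψₙ * μₙ ^ 2 * μ₁) /
        (lam1 * lamn * (lam1 * Ψ₁ * μ₁ ^ 2 + lamn * Ψₙ * μₙ ^ 2))) • ξ₁ -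
      ((lamn - lam1) * (lam1 * Ψ₁ * μ₁ ^ 2 * μₙ) /
        (lam1 * lamn * (lam1 * Ψ₁ * μ₁ ^ 2 + lamn * Ψₙ * μₙ ^ 2))) • ξₙ := by
  have hlamn : 0 < lamn := h1.trans h1n
  have hD : 0 < lam1 * Ψ₁ * μ₁ ^ 2 + lamn * Ψₙ * μₙ ^ 2 :=
    weighted_sq_add_sq_pos (mul_pos h1 hΨ1) (mul_pos hlamn hΨn) hμ
  have hD' : lam1 * (Ψ₁ * μ₁ ^ 2) + lamn * (Ψₙ * μₙ ^ 2) ≠ 0 := by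
    simpa only [mul_assoc] using hD.ne'
  have hc₁ := inv_sub_weighted_stepsize h1.ne' hD'
  have hcₙ := inv_sub_weighted_stepsize hlamn.ne' (by rwa [add_comm] at hD')
  rw [add_comm (Ψₙ * _), add_comm (lamn * _)] at hcₙ
  calc ε' = ((lam1⁻¹ - α) * μ₁) • ξ₁ + ((lamn⁻¹ - α) * μₙ) • ξₙ := by
        rw [hε', hε, hg]; module
    _ = _ := by
      rw [hα, mul_assoc lam1, mul_assoc lamn, hc₁, hcₙ]
      match_scalars
      · field_simp
      · field_simp
        ring

theorem error_update {E : Type*} [NormedAddCommGroup E] [InnerProductSpace ℝ E]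
    (lam1 lamn Ψ₁ Ψₙ μ₁ μₙ : ℝ) (h1 : 0 < lam1) (h1n : lam1 < lamn)
    (hΨ1 : 0 < Ψ₁) (hΨn : 0 < Ψₙ) (hμ : ¬(μ₁ = 0 ∧ μₙ = 0))
    (ξ₁ ξₙ : E) (hn1 : ‖ξ₁‖ = 1) (hnn : ‖ξₙ‖ = 1) (horth : (inner ℝ ξ₁ ξₙ : ℝ) = 0)
    (α : ℝ) (hα : α = (Ψ₁ * μ₁ ^ 2 + Ψₙ * μₙ ^ 2) / (lam1 * Ψ₁ * μ₁ ^ 2 + lamn * Ψₙ * μₙ ^ 2))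
    (ε g ε' : E)
    (hε : ε = (μ₁ / lam1) • ξ₁ + (μₙ / lamn) • ξₙ)
    (hg : g = μ₁ • ξ₁ + μₙ • ξₙ)
    (hε' : ε' = ε - α • g) :
    ε' = ((lamn - lam1) * (lamn * Ψₙ * μₙ ^ 2 * μ₁) /
        (lam1 * lamn * (lam1 * Ψ₁ * μ₁ ^ 2 + lamn * Ψₙ * μₙ ^ 2))) • ξ₁ -
      ((lamn - lam1) * (lam1 * Ψ₁ * μ₁ ^ 2 * μₙ) /
        (lam1 * lamn * (lam1 * Ψ₁ * μ₁ ^ 2 + lamn * Ψₙ * μₙ ^ 2))) • ξₙ :=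
  error_update_general lam1 lamn Ψ₁ Ψₙ μ₁ μₙ h1 h1n hΨ1 hΨn hμ ξ₁ ξₙ α hα ε g ε' hε hg hε'
end

section
/- Let 0 < λ₁ < λₙ, Ψ₁, Ψₙ > 0, κ = λₙ/λ₁, μ₁, μₙ ≠ 0. Under the two-eigenvalue one-step gradient update with stepsize α = (Ψ₁μ₁² + Ψₙμₙ²)/(λ₁Ψ₁μ₁² + λₙΨₙμₙ²), the ratio of consecutive objective gaps satisfies (f(x⁺)−f*)/(f(x)−f*) = μ₁²μₙ²(κ−1)²(κΨₙ²μₙ² + Ψ₁²μ₁²) / ((Ψ₁μ₁² + κΨₙμₙ²)²(κμ₁² + μₙ²)), where f(x)−f* = ½εᵀAε with ε as in the previous statement. -/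
theorem one_step_rate (lam1 lamn Ψ₁ Ψₙ μ₁ μₙ κ α : ℝ) (h1 : 0 < lam1) (h1n : lam1 < lamn)
    (hΨ1 : 0 < Ψ₁) (hΨn : 0 < Ψₙ) (hμ1 : μ₁ ≠ 0) (hμn : μₙ ≠ 0)
    (hκ : κ = lamn / lam1)
    (hα : α = (Ψ₁ * μ₁ ^ 2 + Ψₙ * μₙ ^ 2) / (lam1 * Ψ₁ * μ₁ ^ 2 + lamn * Ψₙ * μₙ ^ 2))
    (μ₁' μₙ' gap gap' : ℝ)
    (hμ1' : μ₁' = (1 - α * lam1) * μ₁) (hμn' : μₙ' = (1 - α * lamn) * μₙ)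
    (hgap : gap = (lamn * μ₁ ^ 2 + lam1 * μₙ ^ 2) / (2 * lam1 * lamn))
    (hgap' : gap' = (lamn * μ₁' ^ 2 + lam1 * μₙ' ^ 2) / (2 * lam1 * lamn)) :
    gap' / gap = μ₁ ^ 2 * μₙ ^ 2 * (κ - 1) ^ 2 * (κ * Ψₙ ^ 2 * μₙ ^ 2 + Ψ₁ ^ 2 * μ₁ ^ 2) /
      ((Ψ₁ * μ₁ ^ 2 + κ * Ψₙ * μₙ ^ 2) ^ 2 * (κ * μ₁ ^ 2 + μₙ ^ 2)) := by
  have hn : (0:ℝ) < lamn := h1.trans h1n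
  have hm1 : 0 < μ₁ ^ 2 := by positivity
  have hmn : 0 < μₙ ^ 2 := by positivity
  have hκpos : 0 < κ := by rw [hκ]; positivity
  have hD : 0 < lam1 * Ψ₁ * μ₁ ^ 2 + lamn * Ψₙ * μₙ ^ 2 := by positivity
  have hgappos : 0 < gap := by rw [hgap]; positivity
  have hD2 : 0 < Ψ₁ * μ₁ ^ 2 + κ * Ψₙ * μₙ ^ 2 := by positivity
  have hD3 : 0 < κ * μ₁ ^ 2 + μₙ ^ 2 := by positivity
  subst hκ hα hμ1' hμn' hgap hgap'
  field_simp
  ring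
end

section
/- Let 0 < λ₁ < λₙ, δ = (λ₁+λₙ)/2, and let λ ∈ (λ₁, λₙ), Ψ₁, Ψₙ > 0, c ≠ 0. Suppose ((λ₁−λₙ)/2)² + (λ−δ)² ≥ 2(γ − δ)² where γ = (λ₁Ψ₁ + λₙΨₙc²)/(Ψ₁ + Ψₙc²). Then 4(1+σ²)/(1−σ²) ≥ (c²Ψₙ − Ψ₁)²/(c²Ψ₁Ψₙ), where σ = (2λ − (λ₁+λₙ))/(λₙ−λ₁). -/
theorem deviation_bound (lam1 lamn lam Ψ₁ Ψₙ c : ℝ) (h1 : 0 < lam1) (h1n : lam1 < lamn)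
    (hlam : lam ∈ Set.Ioo lam1 lamn) (hΨ1 : 0 < Ψ₁) (hΨn : 0 < Ψₙ) (hc : c ≠ 0)
    (δ γ σ : ℝ) (hδ : δ = (lam1 + lamn) / 2)
    (hγ : γ = (lam1 * Ψ₁ + lamn * Ψₙ * c ^ 2) / (Ψ₁ + Ψₙ * c ^ 2))
    (hσ : σ = (2 * lam - (lam1 + lamn)) / (lamn - lam1))
    (hineq : ((lam1 - lamn) / 2) ^ 2 + (lam - δ) ^ 2 ≥ 2 * (γ - δ) ^ 2) :
    4 * (1 + σ ^ 2) / (1 - σ ^ 2) ≥ (c ^ 2 * Ψₙ - Ψ₁) ^ 2 / (c ^ 2 * Ψ₁ * Ψₙ) := by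
  obtain ⟨hl1, hln⟩ := hlam
  have hd : (0:ℝ) < lamn - lam1 := by linarith
  have hc2 : (0:ℝ) < c ^ 2 := by positivity
  have hS : (0:ℝ) < Ψ₁ + Ψₙ * c ^ 2 := by positivity
  have hσ1 : σ < 1 := by
    rw [hσ, div_lt_one hd]; linarith
  have hσ2 : -1 < σ := by
    rw [hσ, lt_div_iff₀ hd]; linarith
  have h1σ : (0:ℝ) < 1 - σ ^ 2 := by nlinarith
  have hσd : lam - δ = σ * ((lamn - lam1) / 2) := by
    rw [hσ, hδ]; field_simp
  have hγδ : γ - δ = (lamn - lam1) * (Ψₙ * c ^ 2 - Ψ₁) / (2 * (Ψ₁ + Ψₙ * c ^ 2)) := by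
    rw [hγ, hδ]; field_simp; ring
  -- key polynomial inequality
  have key : (1 + σ ^ 2) * (Ψ₁ + Ψₙ * c ^ 2) ^ 2 ≥ 2 * (Ψₙ * c ^ 2 - Ψ₁) ^ 2 := by
    rw [hσd, hγδ] at hineq
    have h := mul_le_mul_of_nonneg_left hineq (le_of_lt (by positivity :
      (0:ℝ) < (2 * (Ψ₁ + Ψₙ * c ^ 2) / (lamn - lam1)) ^ 2))
    calc 2 * (Ψₙ * c ^ 2 - Ψ₁) ^ 2
        = (2 * (Ψ₁ + Ψₙ * c ^ 2) / (lamn - lam1)) ^ 2 *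
          (2 * ((lamn - lam1) * (Ψₙ * c ^ 2 - Ψ₁) / (2 * (Ψ₁ + Ψₙ * c ^ 2))) ^ 2) := by
          field_simp
      _ ≤ (2 * (Ψ₁ + Ψₙ * c ^ 2) / (lamn - lam1)) ^ 2 *
          (((lam1 - lamn) / 2) ^ 2 + (σ * ((lamn - lam1) / 2)) ^ 2) := h
      _ = (1 + σ ^ 2) * (Ψ₁ + Ψₙ * c ^ 2) ^ 2 := by field_simp; ring
  rw [ge_iff_le, div_le_div_iff₀ (by positivity) h1σ]
  nlinarith [key, sq_nonneg σ, mul_pos (mul_pos hc2 hΨ1) hΨn]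
end
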